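/- arXiv:1606.08209 — 2 statements merged into one kernel-verified Lean document; each statement's English description precedes it below -/
import Mathlib

section
/- Let p ≥ 0 and let Ξ = [ξ₀, …, ξ_{n+p}] be a nondecreasing open knot vector on [0,1], i.e. ξ₀ = ⋯ = ξ_p = 0 and ξ_n = ⋯ = ξ_{n+p} = 1. Then the B-spline basis functions form a partition of unity on [0,1): ∑_{i=0}^{n−1} B_{i,p}(x) = 1 for every x ∈ [0,1). -/
/-- The Cox–de Boor recursion for B-spline basis functions: `coxDeBoor ξ p i = B_{i,p}`.
`B_{i,0}(x) = 1` if `ξᵢ ≤ x < ξ_{i+1}` and `0` otherwise;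
`B_{i,p}(x) = ((x−ξᵢ)/(ξ_{i+p}−ξᵢ))·B_{i,p−1}(x)
              + ((ξ_{i+p+1}−x)/(ξ_{i+p+1}−ξ_{i+1}))·B_{i+1,p−1}(x)`,
with the convention that a term is `0` whenever its denominator vanishes. -/
noncomputable def coxDeBoor (ξ : ℕ → ℝ) : ℕ → ℕ → ℝ → ℝ
  | 0, i, x => if ξ i ≤ x ∧ x < ξ (i + 1) then 1 else 0
  | p + 1, i, x =>
      (if ξ (i + p + 1) = ξ i then 0
        else (x - ξ i) / (ξ (i + p + 1) - ξ i) * coxDeBoor ξ p i x) +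
      (if ξ (i + p + 2) = ξ (i + 1) then 0
        else (ξ (i + p + 2) - x) / (ξ (i + p + 2) - ξ (i + 1)) * coxDeBoor ξ p (i + 1) x)

/-- If all knots `ξ i, …, ξ (i+q+1)` coincide, then `B_{i,q} ≡ 0`. -/
lemma coxDeBoor_eq_zero (ξ : ℕ → ℝ) :
    ∀ (q i : ℕ) (x : ℝ), (∀ j, i ≤ j → j ≤ i + q + 1 → ξ j = ξ i) →
      coxDeBoor ξ q i x = 0 := by
  intro q
  induction q with
  | zero =>
    intro i x h
    simp only [coxDeBoor]
    rw [if_neg]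
    rintro ⟨h1, h2⟩
    rw [h (i + 1) (by omega) (by omega)] at h2
    exact absurd (h1.trans_lt h2) (lt_irrefl _)
  | succ q ih =>
    intro i x h
    simp only [coxDeBoor]
    rw [if_pos (h (i + q + 1) (by omega) (by omega)),
      if_pos (by rw [h (i + q + 2) (by omega) (by omega), h (i + 1) (by omega) (by omega)]),
      add_zero]

/-- For a nondecreasing *open* knot vector on `[0,1]`
(`ξ₀ = ⋯ = ξ_p = 0` and `ξ_n = ⋯ = ξ_{n+p} = 1`), the B-spline basis functions form a
partition of unity on `[0,1)`: `∑_{i=0}^{n−1} B_{i,p}(x) = 1` for every `x ∈ [0,1)`. -/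
theorem coxDeBoor_partition_of_unity (p n : ℕ) (hn : p < n) (ξ : ℕ → ℝ)
    (hmono : ∀ i j : ℕ, i ≤ j → j ≤ n + p → ξ i ≤ ξ j)
    (hfirst : ∀ i ≤ p, ξ i = 0)
    (hlast : ∀ i : ℕ, n ≤ i → i ≤ n + p → ξ i = 1) :
    ∀ x ∈ Set.Ico (0 : ℝ) 1, ∑ i ∈ Finset.range n, coxDeBoor ξ p i x = 1 := by
  rintro x ⟨hx0, hx1⟩
  -- general claim for every degree q ≤ p
  have key : ∀ q ≤ p, ∑ i ∈ Finset.range (n + p - q), coxDeBoor ξ q i x = 1 := by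
    intro q
    induction q with
    | zero =>
      intro _
      -- telescoping sum of indicators
      have step : ∀ i ∈ Finset.range (n + p - 0), coxDeBoor ξ 0 i x =
          (if ξ i ≤ x then (1 : ℝ) else 0) - (if ξ (i + 1) ≤ x then (1 : ℝ) else 0) := by
        intro i hi
        simp only [Finset.mem_range] at hi
        have hle : ξ i ≤ ξ (i + 1) := hmono i (i + 1) (by omega) (by omega)
        simp only [coxDeBoor]
        by_cases h1 : ξ i ≤ x
        · by_cases h2 : ξ (i + 1) ≤ x
          · rw [if_neg (by rintro ⟨_, hb⟩; exact absurd (h2.trans_lt hb) (lt_irrefl _)),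
              if_pos h1, if_pos h2]; ring
          · rw [if_pos ⟨h1, not_le.mp h2⟩, if_pos h1, if_neg h2]; ring
        · rw [if_neg (by rintro ⟨ha, _⟩; exact h1 ha), if_neg h1,
            if_neg (fun hc => h1 (hle.trans hc))]; ring
      rw [Finset.sum_congr rfl step, Finset.sum_range_sub' (fun i => if ξ i ≤ x then (1:ℝ) else 0)]
      have h0 : ξ 0 = 0 := hfirst 0 (by omega)
      have hNP : ξ (n + p - 0) = 1 := hlast _ (by omega) (by omega)
      rw [if_pos (h0 ▸ hx0), if_neg (by rw [hNP]; exact not_le.mpr hx1)]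
      ring
    | succ q ih =>
      intro hq1
      have hq : q ≤ p := by omega
      have IH := ih hq
      set M := n + p - (q + 1) with hM
      have hM1 : n + p - q = M + 1 := by omega
      have hnM : n ≤ M := by omega
      rw [hM1] at IH
      -- the two coefficient functions
      set a : ℕ → ℝ := fun j => if ξ (j + q + 1) = ξ j then 0
        else (x - ξ j) / (ξ (j + q + 1) - ξ j) * coxDeBoor ξ q j x with ha
      set g : ℕ → ℝ := fun j => if ξ (j + q + 1) = ξ j then 0
        else (ξ (j + q + 1) - x) / (ξ (j + q + 1) - ξ j) * coxDeBoor ξ q j x with hg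
      have unfold : ∀ i, coxDeBoor ξ (q + 1) i x = a i + g (i + 1) := by
        intro i
        simp only [coxDeBoor, ha, hg]
        congr 2 <;> · ring_nf
      have haM : a M = 0 := by
        have h1 : ξ (M + q + 1) = 1 := hlast _ (by omega) (by omega)
        have h2 : ξ M = 1 := hlast _ (by omega) (by omega)
        simp only [ha]
        rw [if_pos (by rw [h1, h2])]
      have hg0 : g 0 = 0 := by
        have h1 : ξ (0 + q + 1) = 0 := hfirst _ (by omega)
        have h2 : ξ 0 = 0 := hfirst _ (by omega)
        simp only [hg]
        rw [if_pos (by rw [h1, h2])]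
      have hsum : ∀ j ∈ Finset.range (M + 1), a j + g j = coxDeBoor ξ q j x := by
        intro j hj
        simp only [Finset.mem_range] at hj
        have hjbd : j + q + 1 ≤ n + p := by omega
        simp only [ha, hg]
        by_cases heq : ξ (j + q + 1) = ξ j
        · rw [if_pos heq, if_pos heq, add_zero]
          symm
          apply coxDeBoor_eq_zero
          intro k hk1 hk2
          exact le_antisymm (heq ▸ hmono k (j + q + 1) (by omega) hjbd)
            (hmono j k hk1 (by omega))
        · rw [if_neg heq, if_neg heq]
          have hd : ξ (j + q + 1) - ξ j ≠ 0 := sub_ne_zero.mpr heq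
          field_simp
          ring
      calc ∑ i ∈ Finset.range M, coxDeBoor ξ (q + 1) i x
          = ∑ i ∈ Finset.range M, (a i + g (i + 1)) :=
            Finset.sum_congr rfl (fun i _ => unfold i)
        _ = (∑ i ∈ Finset.range M, a i) + ∑ i ∈ Finset.range M, g (i + 1) :=
            Finset.sum_add_distrib
        _ = ((∑ i ∈ Finset.range (M + 1), a i) - a M) +
            ((∑ i ∈ Finset.range (M + 1), g i) - g 0) := by
            rw [Finset.sum_range_succ a M, Finset.sum_range_succ' g M]; ring
        _ = ∑ i ∈ Finset.range (M + 1), (a i + g i) := by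
            rw [haM, hg0, Finset.sum_add_distrib]; ring
        _ = ∑ i ∈ Finset.range (M + 1), coxDeBoor ξ q i x :=
            Finset.sum_congr rfl hsum
        _ = 1 := IH
  have := key p le_rfl
  simpa using this
end

section
/- Let p ≥ 0, let Ξ = [ξ₀, …, ξ_{n+p}] be a nondecreasing open knot vector on [0,1], and let w₀, …, w_{n−1} be strictly positive real weights. Then for every x ∈ [0,1) the denominator ∑_{j=0}^{n−1} B_{j,p}(x)·w_j is strictly positive; consequently the NURBS basis functions N_{i,p}(x) = B_{i,p}(x)·w_i / ∑_{j} B_{j,p}(x)·w_j are well defined, nonnegative, and satisfy ∑_{i=0}^{n−1} N_{i,p}(x) = 1 for every x ∈ [0,1). -/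
open Finset

namespace coxDeBoor

variable {ξ : ℕ → ℝ} {N q i : ℕ} {x : ℝ}

/-- The guards in the recursion are redundant, since `a / 0 = 0` in Lean. -/
theorem succ_apply (ξ : ℕ → ℝ) (q i : ℕ) (x : ℝ) :
    coxDeBoor ξ (q + 1) i x =
      (x - ξ i) / (ξ (i + q + 1) - ξ i) * coxDeBoor ξ q i x +
        (ξ (i + 1 + q + 1) - x) / (ξ (i + 1 + q + 1) - ξ (i + 1)) * coxDeBoor ξ q (i + 1) x := by
  rw [show i + 1 + q + 1 = i + q + 2 by omega, coxDeBoor]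
  split_ifs with h₁ h₂ h₂ <;> simp [h₁, h₂]

theorem eq_zero_of_notMem_Ico (hξ : MonotoneOn ξ (Set.Iic N)) (hi : i + q + 1 ≤ N)
    (hx : x ∉ Set.Ico (ξ i) (ξ (i + q + 1))) : coxDeBoor ξ q i x = 0 := by
  induction q generalizing i with
  | zero => exact if_neg hx
  | succ q ih =>
    have hleft : x ∉ Set.Ico (ξ i) (ξ (i + q + 1)) := fun h =>
      hx (Set.Ico_subset_Ico_right (hξ (Set.mem_Iic.2 (by omega)) (Set.mem_Iic.2 (by omega)) (by omega)) h)
    have hright : x ∉ Set.Ico (ξ (i + 1)) (ξ (i + 1 + q + 1)) := fun h =>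
      hx (by
        rw [show i + (q + 1) + 1 = i + 1 + q + 1 by omega]
        exact Set.Ico_subset_Ico_left (hξ (Set.mem_Iic.2 (by omega)) (Set.mem_Iic.2 (by omega)) (by omega)) h)
    rw [succ_apply, ih (by omega) hleft, ih (by omega) hright, mul_zero, mul_zero, add_zero]

theorem nonneg (hξ : MonotoneOn ξ (Set.Iic N)) (hi : i + q + 1 ≤ N) :
    0 ≤ coxDeBoor ξ q i x := by
  induction q generalizing i with
  | zero => unfold coxDeBoor; split_ifs <;> norm_num
  | succ q ih =>
    rw [succ_apply]
    refine add_nonneg ?_ ?_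
    · by_cases hx : x ∈ Set.Ico (ξ i) (ξ (i + q + 1))
      · exact mul_nonneg (div_nonneg (by linarith [hx.1]) (by linarith [hx.1, hx.2]))
          (ih (by omega))
      · rw [eq_zero_of_notMem_Ico hξ (by omega) hx, mul_zero]
    · by_cases hx : x ∈ Set.Ico (ξ (i + 1)) (ξ (i + 1 + q + 1))
      · exact mul_nonneg (div_nonneg (by linarith [hx.2]) (by linarith [hx.1, hx.2]))
          (ih (by omega))
      · rw [eq_zero_of_notMem_Ico hξ (by omega) hx, mul_zero]

theorem blend_add_blend (hξ : MonotoneOn ξ (Set.Iic N)) (hi : i + q + 1 ≤ N) :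
    (x - ξ i) / (ξ (i + q + 1) - ξ i) * coxDeBoor ξ q i x +
      (ξ (i + q + 1) - x) / (ξ (i + q + 1) - ξ i) * coxDeBoor ξ q i x = coxDeBoor ξ q i x := by
  by_cases h : ξ (i + q + 1) = ξ i
  · rw [eq_zero_of_notMem_Ico hξ hi (by simp [h])]
    ring
  · rw [← add_mul, ← add_div, sub_add_sub_cancel', div_self (sub_ne_zero.2 h), one_mul]

theorem sum_range_zero_eq_one {m : ℕ} (hξ : MonotoneOn ξ (Set.Iic m)) (h₀ : ξ 0 ≤ x)
    (hm : x < ξ m) : ∑ i ∈ range m, coxDeBoor ξ 0 i x = 1 := by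
  have hspan : ∀ i ∈ range m, coxDeBoor ξ 0 i x =
      (if ξ i ≤ x then 1 else 0) - (if ξ (i + 1) ≤ x then 1 else 0) := by
    intro i hi
    have hi := mem_range.1 hi
    have hle : ξ i ≤ ξ (i + 1) := hξ (Set.mem_Iic.2 (by omega)) (Set.mem_Iic.2 hi) (by omega)
    simp only [coxDeBoor]
    by_cases h₁ : ξ i ≤ x
    · by_cases h₂ : ξ (i + 1) ≤ x
      · simp [h₁, h₂]
      · simp [h₁, h₂, not_le.1 h₂]
    · simp [h₁, (not_le.1 h₁).trans_le hle]
  rw [sum_congr rfl hspan, sum_range_sub', if_pos h₀, if_neg (not_le.2 hm), sub_zero]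

theorem sum_range_eq_one {m : ℕ} (hξ : MonotoneOn ξ (Set.Iic (m + q))) (hq : ξ q ≤ x)
    (hm : x < ξ m) : ∑ i ∈ range m, coxDeBoor ξ q i x = 1 := by
  induction q generalizing m with
  | zero => exact sum_range_zero_eq_one hξ hq hm
  | succ q ih =>
    set B := fun i => coxDeBoor ξ q i x
    set c := fun i => (x - ξ i) / (ξ (i + q + 1) - ξ i)
    set d := fun i => (ξ (i + q + 1) - x) / (ξ (i + q + 1) - ξ i)
    have hξ' : MonotoneOn ξ (Set.Iic (m + 1 + q)) := by rwa [add_right_comm, add_assoc]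
    have hB₀ : B 0 = 0 := eq_zero_of_notMem_Ico hξ' (by omega) (by simp [hq])
    have hBm : B m = 0 := eq_zero_of_notMem_Ico hξ' (by omega) (by simp [hm])
    have hsum : ∑ i ∈ range (m + 1), B i = 1 := ih hξ'
      (hξ (Set.mem_Iic.2 (by omega)) (Set.mem_Iic.2 (by omega)) (by omega) |>.trans hq)
      (hm.trans_le (hξ (Set.mem_Iic.2 (by omega)) (Set.mem_Iic.2 (by omega)) (by omega)))
    calc ∑ i ∈ range m, coxDeBoor ξ (q + 1) i x
        = ∑ i ∈ range m, (c i * B i + d (i + 1) * B (i + 1)) :=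
          sum_congr rfl fun i _ => succ_apply ξ q i x
      _ = ∑ i ∈ range (m + 1), (c i * B i + d i * B i) - c m * B m - d 0 * B 0 := by
          rw [sum_add_distrib, sum_add_distrib, sum_range_succ (fun i => c i * B i),
            sum_range_succ' (fun i => d i * B i)]
          ring
      _ = 1 := by
          rw [hB₀, hBm, sum_congr rfl fun i hi => blend_add_blend hξ' (by simp at hi; omega)]
          simpa using hsum

end coxDeBoor

theorem nurbs_well_defined_nonneg_partition_of_unity_general (p n : ℕ) (ξ : ℕ → ℝ)
    (hmono : ∀ i j : ℕ, i ≤ j → j ≤ n + p → ξ i ≤ ξ j)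
    (hfirst : ∀ i ≤ p, ξ i = 0)
    (hlast : ∀ i : ℕ, n ≤ i → i ≤ n + p → ξ i = 1)
    (w : ℕ → ℝ) (hw : ∀ i < n, 0 < w i) :
    ∀ x ∈ Set.Ico (0 : ℝ) 1,
      0 < (∑ j ∈ Finset.range n, coxDeBoor ξ p j x * w j) ∧
      (∀ i < n,
        0 ≤ coxDeBoor ξ p i x * w i / ∑ j ∈ Finset.range n, coxDeBoor ξ p j x * w j) ∧
      ∑ i ∈ Finset.range n,
          coxDeBoor ξ p i x * w i / (∑ j ∈ Finset.range n, coxDeBoor ξ p j x * w j) = 1 := by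
  rintro x ⟨hx₀, hx₁⟩
  have hξ : MonotoneOn ξ (Set.Iic (n + p)) := fun i _ j hj hij => hmono i j hij hj
  have hB : ∀ i < n, 0 ≤ coxDeBoor ξ p i x := fun i hi => coxDeBoor.nonneg hξ (by omega)
  have hsum : ∑ i ∈ range n, coxDeBoor ξ p i x = 1 :=
    coxDeBoor.sum_range_eq_one hξ (by rwa [hfirst p le_rfl])
      (by rwa [hlast n le_rfl (by omega)])
  obtain ⟨j, hj, hBj⟩ := exists_ne_zero_of_sum_ne_zero (hsum ▸ one_ne_zero)
  have hj' := mem_range.1 hj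
  have hpos : 0 < ∑ j ∈ range n, coxDeBoor ξ p j x * w j :=
    sum_pos' (fun i hi => mul_nonneg (hB i (mem_range.1 hi)) (hw i (mem_range.1 hi)).le)
      ⟨j, hj, mul_pos ((hB j hj').lt_of_ne' hBj) (hw j hj')⟩
  refine ⟨hpos, fun i hi => div_nonneg (mul_nonneg (hB i hi) (hw i hi).le) hpos.le, ?_⟩
  rw [← sum_div, div_self hpos.ne']

/-- For a nondecreasing open knot vector on `[0,1]` and strictly positive
weights `w₀, …, w_{n−1}`, the NURBS denominator `∑_j B_{j,p}(x)·w_j` is strictly positive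
on `[0,1)`; consequently the NURBS basis functions
`N_{i,p}(x) = B_{i,p}(x)·w_i / ∑_j B_{j,p}(x)·w_j` are well defined, nonnegative, and sum
to `1` for every `x ∈ [0,1)`. -/
theorem nurbs_well_defined_nonneg_partition_of_unity (p n : ℕ) (hn : p < n) (ξ : ℕ → ℝ)
    (hmono : ∀ i j : ℕ, i ≤ j → j ≤ n + p → ξ i ≤ ξ j)
    (hfirst : ∀ i ≤ p, ξ i = 0)
    (hlast : ∀ i : ℕ, n ≤ i → i ≤ n + p → ξ i = 1)
    (w : ℕ → ℝ) (hw : ∀ i < n, 0 < w i) :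
    ∀ x ∈ Set.Ico (0 : ℝ) 1,
      0 < (∑ j ∈ Finset.range n, coxDeBoor ξ p j x * w j) ∧
      (∀ i < n,
        0 ≤ coxDeBoor ξ p i x * w i / ∑ j ∈ Finset.range n, coxDeBoor ξ p j x * w j) ∧
      ∑ i ∈ Finset.range n,
          coxDeBoor ξ p i x * w i / (∑ j ∈ Finset.range n, coxDeBoor ξ p j x * w j) = 1 :=
  nurbs_well_defined_nonneg_partition_of_unity_general p n ξ hmono hfirst hlast w hw
end
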